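/- Define p(s) = 1 - Γ_inc(m, c/s)/Γ(m) for s > 0, where c = m(2^{R_t} - 1) > 0 and m is a positive integer. Then lim_{s→∞} -log(p(s)²(2 + p(s)))/log(s) = 2m. -/

import Mathlib

/-!
Writing `y = c / s`, `p(s) = γ(m, y) / Γ(m)` with `γ` the lower incomplete Gamma function, and
`e^{-y} y^m / m ≤ γ(m, y) ≤ y^m / m`. Hence `log p(s) = -m log s + O(1)`, and as `2 + p(s)` stays
in `[2, 3]`, `-log (p(s)² (2 + p(s))) = 2m log s + O(1)`.
-/

open MeasureTheory Real Filter Set Topology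

noncomputable def lowerIncGamma (a y : ℝ) : ℝ := ∫ t in Ioc 0 y, t ^ (a - 1) * exp (-t)

noncomputable def upperIncGamma (a y : ℝ) : ℝ := ∫ t in Ioi y, t ^ (a - 1) * exp (-t)

section IncompleteGamma

variable {a y : ℝ}

lemma integrableOn_rpow_sub_one_mul_exp_neg (ha : 0 < a) :
    IntegrableOn (fun t : ℝ => t ^ (a - 1) * exp (-t)) (Ioi 0) :=
  (GammaIntegral_convergent ha).congr_fun (fun _ _ => mul_comm _ _) measurableSet_Ioi

lemma lowerIncGamma_add_upperIncGamma (ha : 0 < a) (hy : 0 ≤ y) :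
    lowerIncGamma a y + upperIncGamma a y = Gamma a := by
  have hint := integrableOn_rpow_sub_one_mul_exp_neg ha
  rw [Gamma_eq_integral ha, ← Ioc_union_Ioi_eq_Ioi hy]
  simp_rw [mul_comm (exp _)]
  exact (setIntegral_union (Ioc_disjoint_Ioi le_rfl) measurableSet_Ioi
    (hint.mono_set Ioc_subset_Ioi_self) (hint.mono_set (Ioi_subset_Ioi hy))).symm

lemma lowerIncGamma_le_Gamma (ha : 0 < a) (hy : 0 ≤ y) : lowerIncGamma a y ≤ Gamma a := by
  rw [← lowerIncGamma_add_upperIncGamma ha hy, le_add_iff_nonneg_right]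
  exact setIntegral_nonneg measurableSet_Ioi fun t ht =>
    mul_nonneg (rpow_nonneg (hy.trans (le_of_lt ht)) _) (exp_pos _).le

lemma one_sub_upperIncGamma_div_Gamma (ha : 0 < a) (hy : 0 ≤ y) :
    1 - upperIncGamma a y / Gamma a = lowerIncGamma a y / Gamma a := by
  have hΓ := (Gamma_pos_of_pos ha).ne'
  rw [eq_div_iff hΓ, sub_mul, div_mul_cancel₀ _ hΓ, one_mul,
    ← lowerIncGamma_add_upperIncGamma ha hy, add_sub_cancel_right]

lemma integrableOn_Ioc_rpow_sub_one (ha : 0 < a) (hy : 0 ≤ y) :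
    IntegrableOn (fun t : ℝ => t ^ (a - 1)) (Ioc 0 y) :=
  (intervalIntegrable_iff_integrableOn_Ioc_of_le hy).mp
    (intervalIntegral.intervalIntegrable_rpow' (by linarith))

lemma integral_Ioc_rpow_sub_one (ha : 0 < a) (hy : 0 ≤ y) :
    ∫ t in Ioc 0 y, t ^ (a - 1) = y ^ a / a := by
  rw [← intervalIntegral.integral_of_le hy, integral_rpow (Or.inl (by linarith)),
    sub_add_cancel, zero_rpow ha.ne', sub_zero]

lemma lowerIncGamma_le (ha : 0 < a) (hy : 0 ≤ y) : lowerIncGamma a y ≤ y ^ a / a := by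
  rw [← integral_Ioc_rpow_sub_one ha hy]
  refine setIntegral_mono_on
    ((integrableOn_rpow_sub_one_mul_exp_neg ha).mono_set Ioc_subset_Ioi_self)
    (integrableOn_Ioc_rpow_sub_one ha hy) measurableSet_Ioc fun t ht => ?_
  exact mul_le_of_le_one_right (rpow_nonneg ht.1.le _) (exp_le_one_iff.mpr (by linarith [ht.1]))

lemma exp_neg_mul_le_lowerIncGamma (ha : 0 < a) (hy : 0 ≤ y) :
    exp (-y) * (y ^ a / a) ≤ lowerIncGamma a y := by
  rw [← integral_Ioc_rpow_sub_one ha hy, ← integral_const_mul]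
  refine setIntegral_mono_on ((integrableOn_Ioc_rpow_sub_one ha hy).const_mul _)
    ((integrableOn_rpow_sub_one_mul_exp_neg ha).mono_set Ioc_subset_Ioi_self)
    measurableSet_Ioc fun t ht => ?_
  rw [mul_comm]
  exact mul_le_mul_of_nonneg_left (exp_le_exp.mpr (neg_le_neg ht.2)) (rpow_nonneg ht.1.le _)

lemma lowerIncGamma_pos (ha : 0 < a) (hy : 0 < y) : 0 < lowerIncGamma a y :=
  lt_of_lt_of_le (by positivity) (exp_neg_mul_le_lowerIncGamma ha hy.le)

lemma abs_log_lowerIncGamma_sub_le (ha : 0 < a) (hy : 0 < y) :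
    |log (lowerIncGamma a y) - log (y ^ a / a)| ≤ y := by
  have hlower := log_le_log (by positivity) (exp_neg_mul_le_lowerIncGamma ha hy.le)
  have hupper := log_le_log (lowerIncGamma_pos ha hy) (lowerIncGamma_le ha hy.le)
  rw [log_mul (exp_ne_zero _) (by positivity), log_exp] at hlower
  rw [abs_sub_le_iff]
  constructor <;> linarith

end IncompleteGamma

lemma tendsto_div_log_atTop_of_abs_sub_le {f : ℝ → ℝ} {L C : ℝ}
    (h : ∀ᶠ s in atTop, |f s - L * log s| ≤ C) :
    Tendsto (fun s => f s / log s) atTop (𝓝 L) := by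
  have herr : Tendsto (fun s => (f s - L * log s) / log s) atTop (𝓝 0) := by
    refine squeeze_zero_norm' (a := fun s => C / log s) ?_
      (tendsto_const_nhds.div_atTop tendsto_log_atTop)
    filter_upwards [h, eventually_gt_atTop 1] with s hs hs1
    rw [norm_div, norm_of_nonneg (log_pos hs1).le]
    exact div_le_div_of_nonneg_right hs (log_pos hs1).le
  simpa using (herr.const_add L).congr' <| by
    filter_upwards [eventually_gt_atTop 1] with s hs1
    field_simp [(log_pos hs1).ne']
    ring

theorem diversity_order_two_pairs (m : ℕ) (hm : 0 < m) (c : ℝ) (hc : 0 < c)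
    (p : ℝ → ℝ)
    (hp : ∀ s : ℝ, 0 < s →
      p s = 1 - (∫ a in Set.Ioi (c / s), a ^ ((m : ℝ) - 1) * Real.exp (-a)) / Real.Gamma m) :
    Tendsto (fun s : ℝ => -Real.log ((p s) ^ 2 * (2 + p s)) / Real.log s)
      atTop (nhds (2 * m)) := by
  have hm' : (0 : ℝ) < m := Nat.cast_pos.mpr hm
  have hΓ : 0 < Gamma m := Gamma_pos_of_pos hm'
  set K := (m : ℝ) * log c - log m - log (Gamma m)
  refine tendsto_div_log_atTop_of_abs_sub_le (C := 2 * c + 2 * |K| + log 3) ?_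
  filter_upwards [eventually_ge_atTop 1] with s hs1
  have hs : 0 < s := by linarith
  have hy : 0 < c / s := div_pos hc hs
  have hγ := lowerIncGamma_pos hm' hy
  have hps : p s = lowerIncGamma m (c / s) / Gamma m :=
    (hp s hs).trans (one_sub_upperIncGamma_div_Gamma hm' hy.le)
  have hp0 : 0 < p s := hps ▸ div_pos hγ hΓ
  have hp1 : p s ≤ 1 := hps ▸ (div_le_one hΓ).mpr (lowerIncGamma_le_Gamma hm' hy.le)
  have hlog3 : |log (2 + p s)| ≤ log 3 := by
    rw [abs_of_nonneg (log_nonneg (by linarith))]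
    exact log_le_log (by linarith) (by linarith)
  have hγ_approx := abs_log_lowerIncGamma_sub_le hm' hy
  have hsplit : -log (p s ^ 2 * (2 + p s)) - 2 * m * log s =
      -2 * (log (lowerIncGamma m (c / s)) - log ((c / s) ^ (m : ℝ) / m)) - 2 * K
        - log (2 + p s) := by
    rw [log_mul (by positivity) (by positivity), log_pow, hps, log_div hγ.ne' hΓ.ne',
      log_div (by positivity) hm'.ne', log_rpow hy, log_div hc.ne' hs.ne']
    push_cast
    ring
  rw [hsplit]
  have hys : c / s ≤ c := div_le_self hc.le hs1
  rw [abs_le] at hγ_approx hlog3 ⊢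
  constructor <;> linarith [abs_nonneg K, le_abs_self K, neg_abs_le K]
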